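/- If ∫_x^{+∞}(1-F(t)) dt ≤ ∫_x^{+∞}(1-G(t)) dt for all x ≥ x0, then X ≤_{G(x0)-tvar} Y, i.e., TVaR_p(X) ≤ TVaR_p(Y) for all p > G(x0). -/

import Mathlib

open MeasureTheory Set

/-- Distribution function of a measure on ℝ. -/
noncomputable def cdfR (μ : Measure ℝ) (x : ℝ) : ℝ := (μ (Iic x)).toReal

/-- Quantile function (generalized inverse of the cdf). -/
noncomputable def quantR (μ : Measure ℝ) (p : ℝ) : ℝ := sInf {x | p ≤ cdfR μ x}

/-- Tail value at risk. -/
noncomputable def tvarR (μ : Measure ℝ) (p : ℝ) : ℝ := (1 - p)⁻¹ * ∫ u in p..1, quantR μ u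

open Filter Topology ProbabilityTheory ENNReal

section aux

variable {μ : Measure ℝ} [IsProbabilityMeasure μ]

lemma cdfR_eq_cdf (μ : Measure ℝ) [IsProbabilityMeasure μ] :
    cdfR μ = ProbabilityTheory.cdf μ := by
  funext x; rw [cdfR, ProbabilityTheory.cdf_eq_real, measureReal_def]

lemma cdfR_mono : Monotone (cdfR μ) := by
  rw [cdfR_eq_cdf]; exact monotone_cdf _

lemma measurable_cdfR : Measurable (cdfR μ) := cdfR_mono.measurable

lemma cdfR_nonneg (x : ℝ) : 0 ≤ cdfR μ x := ENNReal.toReal_nonneg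

lemma cdfR_le_one (x : ℝ) : cdfR μ x ≤ 1 := by
  rw [cdfR_eq_cdf]; exact cdf_le_one μ x

lemma quant_set_nonempty {p : ℝ} (hp : p < 1) : {x | p ≤ cdfR μ x}.Nonempty := by
  obtain ⟨x, hx⟩ := ((tendsto_cdf_atTop μ).eventually (eventually_ge_nhds hp)).exists
  exact ⟨x, by rw [cdfR_eq_cdf]; exact hx⟩

lemma quant_set_bddBelow {p : ℝ} (hp : 0 < p) : BddBelow {x | p ≤ cdfR μ x} := by
  obtain ⟨y, hy⟩ := ((tendsto_cdf_atBot μ).eventually (eventually_lt_nhds hp)).exists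
  refine ⟨y, fun s hs => ?_⟩
  by_contra hsy
  push_neg at hsy
  have h1 : cdfR μ s ≤ cdfR μ y := cdfR_mono hsy.le
  rw [cdfR_eq_cdf] at h1
  have : p ≤ ProbabilityTheory.cdf μ s := by rw [← cdfR_eq_cdf]; exact hs
  linarith

lemma quantR_le_iff {p x : ℝ} (hp0 : 0 < p) (hp1 : p < 1) :
    quantR μ p ≤ x ↔ p ≤ cdfR μ x := by
  constructor
  · intro h
    have key : ∀ᶠ y in 𝓝[>] x, p ≤ cdfR μ y := by
      refine eventually_mem_nhdsWithin.mono fun y hy => ?_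
      obtain ⟨s, hs, hsy⟩ := (csInf_lt_iff (quant_set_bddBelow hp0)
        (quant_set_nonempty hp1)).1 (lt_of_le_of_lt h hy)
      exact le_trans hs (cdfR_mono hsy.le)
    have hc : Tendsto (cdfR μ) (𝓝[>] x) (𝓝 (cdfR μ x)) := by
      rw [cdfR_eq_cdf]
      exact ((ProbabilityTheory.cdf μ).right_continuous x).tendsto.mono_left
        (nhdsWithin_mono _ Ioi_subset_Ici_self)
    exact ge_of_tendsto hc key
  · intro h
    exact csInf_le (quant_set_bddBelow hp0) h

lemma lt_quantR_iff {p x : ℝ} (hp0 : 0 < p) (hp1 : p < 1) :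
    x < quantR μ p ↔ cdfR μ x < p := by
  rw [← not_le, ← not_le, quantR_le_iff hp0 hp1]

lemma quantR_monoOn : MonotoneOn (quantR μ) (Ioo 0 1) := fun u hu v hv huv =>
  csInf_le_csInf (quant_set_bddBelow hu.1) (quant_set_nonempty hv.2)
    (fun x hx => le_trans huv hx)

lemma swap_lemma (κ₁ κ₂ : Measure ℝ) [SFinite κ₁] [SFinite κ₂] {r : ℝ → ℝ → Prop}
    (hr : MeasurableSet {q : ℝ × ℝ | r q.1 q.2}) :
    ∫⁻ t, κ₂ {x | r t x} ∂κ₁ = ∫⁻ x, κ₁ {t | r t x} ∂κ₂ := by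
  have hmeas : Measurable ({q : ℝ × ℝ | r q.1 q.2}.indicator (1 : ℝ × ℝ → ℝ≥0∞)) :=
    measurable_one.indicator hr
  calc ∫⁻ t, κ₂ {x | r t x} ∂κ₁
      = ∫⁻ t, ∫⁻ x, {q : ℝ × ℝ | r q.1 q.2}.indicator 1 (t, x) ∂κ₂ ∂κ₁ := by
        refine lintegral_congr fun t => ?_
        have hst : κ₂ {x | r t x} = κ₂ (Prod.mk t ⁻¹' {q : ℝ × ℝ | r q.1 q.2}) := rfl
        rw [hst, ← lintegral_indicator_one (measurable_prodMk_left hr)]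
        exact lintegral_congr fun x => by by_cases h : r t x <;> simp [Set.indicator, h]
    _ = ∫⁻ x, ∫⁻ t, {q : ℝ × ℝ | r q.1 q.2}.indicator 1 (t, x) ∂κ₁ ∂κ₂ :=
        lintegral_lintegral_swap hmeas.aemeasurable
    _ = ∫⁻ x, κ₁ {t | r t x} ∂κ₂ := by
        refine lintegral_congr fun x => ?_
        have hst : κ₁ {t | r t x} = κ₁ ((fun t => (t, x)) ⁻¹' {q : ℝ × ℝ | r q.1 q.2}) := rfl
        rw [hst, ← lintegral_indicator_one (measurable_prodMk_right hr)]
        exact lintegral_congr fun t => by by_cases h : r t x <;> simp [Set.indicator, h]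

lemma key_identity (ρ : Measure ℝ) [IsProbabilityMeasure ρ] {p : ℝ}
    (hp0 : 0 < p) (hp1 : p < 1) (a : ℝ) :
    ∫⁻ u in Ioo p 1, ENNReal.ofReal (quantR ρ u - a) =
      ∫⁻ t in Ioi a, ENNReal.ofReal (1 - max p (cdfR ρ t)) := by
  have hrm : MeasurableSet {q : ℝ × ℝ | cdfR ρ q.2 < q.1} :=
    measurableSet_lt (measurable_cdfR.comp measurable_snd) measurable_fst
  have hswap : ∫⁻ u in Ioo p 1, (volume.restrict (Ioi a)) {t | cdfR ρ t < u}
      = ∫⁻ t in Ioi a, (volume.restrict (Ioo p 1)) {u | cdfR ρ t < u} :=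
    swap_lemma _ _ (r := fun u t => cdfR ρ t < u) hrm
  calc ∫⁻ u in Ioo p 1, ENNReal.ofReal (quantR ρ u - a)
      = ∫⁻ u in Ioo p 1, (volume.restrict (Ioi a)) {t | cdfR ρ t < u} := by
        refine setLIntegral_congr_fun measurableSet_Ioo (fun u hu => ?_)
        rw [Measure.restrict_apply (measurableSet_lt measurable_cdfR measurable_const)]
        have h1 : {t | cdfR ρ t < u} = Iio (quantR ρ u) := by
          ext t
          exact (lt_quantR_iff (hp0.trans hu.1) hu.2).symm
        rw [h1, Iio_inter_Ioi, Real.volume_Ioo]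
    _ = ∫⁻ t in Ioi a, (volume.restrict (Ioo p 1)) {u | cdfR ρ t < u} := hswap
    _ = ∫⁻ t in Ioi a, ENNReal.ofReal (1 - max p (cdfR ρ t)) := by
        refine setLIntegral_congr_fun measurableSet_Ioi (fun t _ => ?_)
        show (volume.restrict (Ioo p 1)) (Ioi (cdfR ρ t)) = _
        rw [Measure.restrict_apply measurableSet_Ioi]
        have h1 : Ioi (cdfR ρ t) ∩ Ioo p 1 = Ioo (max p (cdfR ρ t)) 1 := by
          ext x
          simp only [mem_inter_iff, mem_Ioi, mem_Ioo, max_lt_iff]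
          tauto
        show volume (Ioi (cdfR ρ t) ∩ Ioo p 1) = _
        rw [h1, Real.volume_Ioo]

lemma ofReal_one_sub_cdfR (ρ : Measure ℝ) [IsProbabilityMeasure ρ] (t : ℝ) :
    ENNReal.ofReal (1 - cdfR ρ t) = ρ (Ioi t) := by
  have h1 : ρ (Ioi t) = 1 - ρ (Iic t) := by
    rw [← compl_Iic, measure_compl measurableSet_Iic (measure_ne_top _ _), measure_univ]
  have h2 : (1 : ℝ) - cdfR ρ t = ((1 : ℝ≥0∞) - ρ (Iic t)).toReal := by
    rw [ENNReal.toReal_sub_of_le prob_le_one one_ne_top, ENNReal.toReal_one, cdfR]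
  rw [h2, ENNReal.ofReal_toReal (by simp [sub_ne_top]), h1]

lemma tail_lintegral_lt_top (ρ : Measure ℝ) [IsProbabilityMeasure ρ]
    (h : Integrable id ρ) (a : ℝ) :
    ∫⁻ t in Ioi a, ENNReal.ofReal (1 - cdfR ρ t) < ⊤ := by
  have heq : ∫⁻ t in Ioi a, ENNReal.ofReal (1 - cdfR ρ t) = ∫⁻ t in Ioi a, ρ (Ioi t) :=
    lintegral_congr fun t => ofReal_one_sub_cdfR ρ t
  have hswap : ∫⁻ t in Ioi a, ρ (Ioi t) = ∫⁻ x, (volume.restrict (Ioi a)) (Iio x) ∂ρ :=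
    swap_lemma _ _ (r := fun t x => t < x) (measurableSet_lt measurable_fst measurable_snd)
  have hbd : ∀ x : ℝ, (volume.restrict (Ioi a)) (Iio x)
      ≤ ENNReal.ofReal |x| + ENNReal.ofReal |a| := by
    intro x
    rw [Measure.restrict_apply measurableSet_Iio, Iio_inter_Ioi, Real.volume_Ioo,
      ← ENNReal.ofReal_add (abs_nonneg _) (abs_nonneg _)]
    exact ENNReal.ofReal_le_ofReal (by cases abs_cases x <;> cases abs_cases a <;> linarith)
  calc ∫⁻ t in Ioi a, ENNReal.ofReal (1 - cdfR ρ t)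
      = ∫⁻ x, (volume.restrict (Ioi a)) (Iio x) ∂ρ := by rw [heq, hswap]
    _ ≤ ∫⁻ x, (ENNReal.ofReal |x| + ENNReal.ofReal |a|) ∂ρ := lintegral_mono hbd
    _ = (∫⁻ x, ENNReal.ofReal |x| ∂ρ) + ENNReal.ofReal |a| := by
        rw [lintegral_add_right _ measurable_const, lintegral_const, measure_univ, mul_one]
    _ < ⊤ := by
        refine ENNReal.add_lt_top.2 ⟨?_, ENNReal.ofReal_lt_top⟩
        have := h.hasFiniteIntegral
        rw [hasFiniteIntegral_def] at this
        refine lt_of_eq_of_lt ?_ this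
        exact lintegral_congr fun x => by
          rw [← ofReal_norm_eq_enorm, Real.norm_eq_abs]; rfl

variable {ρ : Measure ℝ} [IsProbabilityMeasure ρ] {p : ℝ}

lemma quant_lint_lt_top (h : Integrable id ρ) (hp0 : 0 < p) (hp1 : p < 1) (a : ℝ) :
    ∫⁻ u in Ioo p 1, ENNReal.ofReal (quantR ρ u - a) < ⊤ := by
  rw [key_identity ρ hp0 hp1 a]
  refine lt_of_le_of_lt (lintegral_mono fun t => ENNReal.ofReal_le_ofReal ?_)
    (tail_lintegral_lt_top ρ h a)
  have := le_max_right p (cdfR ρ t); linarith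

lemma quant_integrableOn (h : Integrable id ρ) (hp0 : 0 < p) (hp1 : p < 1) :
    IntegrableOn (quantR ρ) (Ioo p 1) := by
  have hmeas : AEMeasurable (quantR ρ) (volume.restrict (Ioo p 1)) :=
    aemeasurable_restrict_of_monotoneOn measurableSet_Ioo
      (quantR_monoOn.mono (Ioo_subset_Ioo hp0.le le_rfl))
  refine ⟨hmeas.aestronglyMeasurable, ?_⟩
  rw [hasFiniteIntegral_def]
  set L := quantR ρ p with hL
  have hbound : ∀ u ∈ Ioo p 1, (‖quantR ρ u‖₊ : ℝ≥0∞)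
      ≤ ENNReal.ofReal |L| + ENNReal.ofReal (quantR ρ u - L) := by
    intro u hu
    have hLle : L ≤ quantR ρ u :=
      quantR_monoOn ⟨hp0, hp1⟩ ⟨hp0.trans hu.1, hu.2⟩ hu.1.le
    rw [← enorm_eq_nnnorm, ← ofReal_norm_eq_enorm, ← ENNReal.ofReal_add (abs_nonneg _) (by linarith)]
    refine ENNReal.ofReal_le_ofReal ?_
    rw [Real.norm_eq_abs, abs_le]
    constructor <;> [skip; skip] <;>
      (try cases abs_cases L) <;> cases abs_cases L <;> linarith
  calc ∫⁻ u in Ioo p 1, (‖quantR ρ u‖₊ : ℝ≥0∞)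
      ≤ ∫⁻ u in Ioo p 1, (ENNReal.ofReal |L| + ENNReal.ofReal (quantR ρ u - L)) := by
        refine lintegral_mono_ae ((ae_restrict_iff' measurableSet_Ioo).2 (ae_of_all _ hbound))
    _ = ENNReal.ofReal |L| * volume (Ioo p 1)
        + ∫⁻ u in Ioo p 1, ENNReal.ofReal (quantR ρ u - L) := by
        rw [lintegral_add_left measurable_const, setLIntegral_const]
    _ < ⊤ := by
        refine ENNReal.add_lt_top.2 ⟨?_, quant_lint_lt_top h hp0 hp1 L⟩
        exact ENNReal.mul_lt_top ENNReal.ofReal_lt_top (by simp [Real.volume_Ioo])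

lemma bochner_eq (h : Integrable id ρ) (hp0 : 0 < p) (hp1 : p < 1) {a : ℝ}
    (ha : ∀ u ∈ Ioo p 1, a ≤ quantR ρ u) :
    ∫ u in Ioo p 1, quantR ρ u
      = a * (1 - p) + (∫⁻ u in Ioo p 1, ENNReal.ofReal (quantR ρ u - a)).toReal := by
  have him := quant_integrableOn h hp0 hp1
  have hconst : IntegrableOn (fun _ : ℝ => a) (Ioo p 1) :=
    integrableOn_const (by simp [Real.volume_Ioo])
  have hsub : IntegrableOn (fun u => quantR ρ u - a) (Ioo p 1) := him.sub hconst
  have hsplit : ∫ u in Ioo p 1, quantR ρ u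
      = (∫ _u in Ioo p 1, a) + ∫ u in Ioo p 1, (quantR ρ u - a) := by
    rw [← integral_add hconst hsub]
    exact setIntegral_congr_fun measurableSet_Ioo fun u _ => by ring
  rw [hsplit, setIntegral_const]
  congr 1
  · simp [hp1.le, Real.volume_Ioo, ENNReal.toReal_ofReal (by linarith : (0:ℝ) ≤ 1 - p), smul_eq_mul,
      mul_comm]
  · exact integral_eq_lintegral_of_nonneg_ae
      ((ae_restrict_iff' measurableSet_Ioo).2 (ae_of_all _ fun u hu => by
        have := ha u hu; simp only [Pi.zero_apply]; linarith))
      hsub.aestronglyMeasurable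

lemma bochner_le (h : Integrable id ρ) (hp0 : 0 < p) (hp1 : p < 1) (a : ℝ) :
    ∫ u in Ioo p 1, quantR ρ u
      ≤ a * (1 - p) + (∫⁻ u in Ioo p 1, ENNReal.ofReal (quantR ρ u - a)).toReal := by
  have him := quant_integrableOn h hp0 hp1
  have hconst : IntegrableOn (fun _ : ℝ => a) (Ioo p 1) :=
    integrableOn_const (by simp [Real.volume_Ioo])
  have hpos : IntegrableOn (fun u => max (quantR ρ u - a) 0) (Ioo p 1) :=
    (him.sub hconst).pos_part
  have hmono : ∫ u in Ioo p 1, quantR ρ u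
      ≤ ∫ u in Ioo p 1, (a + max (quantR ρ u - a) 0) := by
    refine setIntegral_mono_on him (hconst.add hpos) measurableSet_Ioo fun u _ => ?_
    have := le_max_left (quantR ρ u - a) (0:ℝ); linarith
  refine hmono.trans ?_
  rw [integral_add hconst hpos, setIntegral_const]
  have h1 : volume.real (Ioo p 1) • a = a * (1 - p) := by
    simp [hp1.le, Real.volume_Ioo, ENNReal.toReal_ofReal (by linarith : (0:ℝ) ≤ 1 - p), smul_eq_mul,
      mul_comm]
  rw [h1]
  refine add_le_add_right (le_of_eq ?_) _
  have hrep : ∫ u in Ioo p 1, max (quantR ρ u - a) 0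
      = (∫⁻ u in Ioo p 1, ENNReal.ofReal (max (quantR ρ u - a) 0)).toReal :=
    integral_eq_lintegral_of_nonneg_ae (ae_of_all _ fun u => le_max_right _ _)
      hpos.aestronglyMeasurable
  rw [hrep]
  congr 1
  exact lintegral_congr fun u => by
    rcases le_total (quantR ρ u - a) 0 with h' | h'
    · simp [max_eq_right h', ENNReal.ofReal_of_nonpos h']
    · rw [max_eq_left h']

end aux

theorem stmt13 (μ ν : Measure ℝ) [IsProbabilityMeasure μ] [IsProbabilityMeasure ν]
    (hX : Integrable id μ) (hY : Integrable id ν) (x0 : ℝ)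
    (htails : ∀ x, x0 ≤ x →
      (∫ t in Set.Ioi x, (1 - cdfR μ t)) ≤ ∫ t in Set.Ioi x, (1 - cdfR ν t)) :
    ∀ p, cdfR ν x0 < p → p < 1 → tvarR μ p ≤ tvarR ν p := by
  intro p hpx0 hp1
  have hp0 : 0 < p := lt_of_le_of_lt (cdfR_nonneg x0) hpx0
  set q := quantR ν p with hq
  have hx0q : x0 ≤ q := by
    refine le_csInf (quant_set_nonempty hp1) fun x hx => ?_
    by_contra hc
    push_neg at hc
    have : cdfR ν x ≤ cdfR ν x0 := cdfR_mono hc.le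
    have hpx : p ≤ cdfR ν x := hx
    linarith
  have hqle : ∀ u ∈ Ioo p 1, q ≤ quantR ν u := fun u hu =>
    quantR_monoOn ⟨hp0, hp1⟩ ⟨hp0.trans hu.1, hu.2⟩ hu.1.le
  have hνid : ∫⁻ u in Ioo p 1, ENNReal.ofReal (quantR ν u - q)
      = ∫⁻ t in Ioi q, ENNReal.ofReal (1 - cdfR ν t) := by
    rw [key_identity ν hp0 hp1 q]
    refine setLIntegral_congr_fun measurableSet_Ioi (fun t ht => ?_)
    rw [max_eq_right ((quantR_le_iff hp0 hp1).1 (le_of_lt ht))]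
  have hμle : ∫⁻ u in Ioo p 1, ENNReal.ofReal (quantR μ u - q)
      ≤ ∫⁻ t in Ioi q, ENNReal.ofReal (1 - cdfR μ t) := by
    rw [key_identity μ hp0 hp1 q]
    refine lintegral_mono fun t => ENNReal.ofReal_le_ofReal ?_
    have := le_max_right p (cdfR μ t); linarith
  have treal : ∀ (ρ : Measure ℝ) [IsProbabilityMeasure ρ], ∫ t in Ioi q, (1 - cdfR ρ t)
      = (∫⁻ t in Ioi q, ENNReal.ofReal (1 - cdfR ρ t)).toReal := by
    intro ρ _
    rw [integral_eq_lintegral_of_nonneg_ae (f := fun t => 1 - cdfR ρ t) (ae_of_all _ fun t => by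
        have := cdfR_le_one (μ := ρ) t; simp only [Pi.zero_apply]; linarith)
      ((measurable_const.sub measurable_cdfR).aestronglyMeasurable)]
  have hchain : ∫ u in Ioo p 1, quantR μ u ≤ ∫ u in Ioo p 1, quantR ν u := by
    calc ∫ u in Ioo p 1, quantR μ u
        ≤ q * (1 - p) + (∫⁻ u in Ioo p 1, ENNReal.ofReal (quantR μ u - q)).toReal :=
          bochner_le hX hp0 hp1 q
      _ ≤ q * (1 - p) + (∫⁻ t in Ioi q, ENNReal.ofReal (1 - cdfR μ t)).toReal := by
          refine add_le_add_right (ENNReal.toReal_mono ?_ hμle) _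
          exact (tail_lintegral_lt_top μ hX q).ne
      _ = q * (1 - p) + ∫ t in Ioi q, (1 - cdfR μ t) := by rw [treal μ]
      _ ≤ q * (1 - p) + ∫ t in Ioi q, (1 - cdfR ν t) := add_le_add_right (htails q hx0q) _
      _ = q * (1 - p) + (∫⁻ u in Ioo p 1, ENNReal.ofReal (quantR ν u - q)).toReal := by
          rw [treal ν, hνid]
      _ = ∫ u in Ioo p 1, quantR ν u := (bochner_eq hY hp0 hp1 hqle).symm
  have hival : ∀ (ρ : Measure ℝ), ∫ u in p..1, quantR ρ u = ∫ u in Ioo p 1, quantR ρ u := by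
    intro ρ
    rw [intervalIntegral.integral_of_le hp1.le, integral_Ioc_eq_integral_Ioo]
  rw [tvarR, tvarR, hival μ, hival ν]
  have h1p : (0:ℝ) ≤ (1 - p)⁻¹ := inv_nonneg.2 (by linarith)
  exact mul_le_mul_of_nonneg_left hchain h1p
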